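/- arXiv:1611.06371 — 4 statements merged into one kernel-verified Lean document; each statement's English description precedes it below -/
import Mathlib

section
/- Let q be an odd prime power and let n divide (q-1)/2 with n ≥ 3. If n is even, then the number of negacyclic LCD codes C over F_q of length n with {0} ≠ C ≠ F_q^n equals 2(2^{(n-2)/2} - 1); if n is odd, this number equals 2(2^{(n-1)/2} - 1). -/
open Finset

/-- The negacyclic shift of a word: `(c_0, ..., c_{n-1}) ↦ (-c_{n-1}, c_0, ..., c_{n-2})`. -/
def negashift {F : Type*} [Neg F] {n : ℕ} (c : Fin n → F) : Fin n → F :=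
  fun i =>
    if _h : (i : ℕ) = 0 then -c ⟨n - 1, Nat.sub_lt i.pos Nat.one_pos⟩
    else c ⟨(i : ℕ) - 1, lt_of_le_of_lt (Nat.sub_le _ _) i.isLt⟩

/-- A linear code `C ≤ F^n` is negacyclic if it is closed under the negacyclic shift. -/
def IsNegacyclic {F : Type*} [Field F] {n : ℕ} (C : Submodule F (Fin n → F)) : Prop :=
  ∀ c ∈ C, negashift c ∈ C

/-- `C` is an LCD code: `C ∩ C^⊥ = {0}` for the Euclidean inner product. -/
def IsLCD {F : Type*} [Field F] {n : ℕ} (C : Submodule F (Fin n → F)) : Prop :=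
  ∀ x ∈ C, (∀ y ∈ C, ∑ i, x i * y i = 0) → x = 0

/-- `C` is a Hermitian LCD code: `C ∩ C^{⊥H} = {0}` for the Hermitian inner product
`⟨x, y⟩ = ∑ x_i y_i^q`. -/
def IsHermLCD (q : ℕ) {F : Type*} [Field F] {n : ℕ} (C : Submodule F (Fin n → F)) : Prop :=
  ∀ x ∈ C, (∀ y ∈ C, ∑ i, x i * (y i) ^ q = 0) → x = 0

open scoped Classical in
/-- The Hamming weight of a word. -/
noncomputable def wt {F : Type*} [Zero F] {n : ℕ} (c : Fin n → F) : ℕ :=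
  (Finset.univ.filter fun i => c i ≠ 0).card

/-- The minimum distance of the code `C` is exactly `d`: `d` is the least Hamming weight
of a nonzero codeword. -/
def HasMinDist {F : Type*} [Zero F] {n : ℕ} (C : Set (Fin n → F)) (d : ℕ) : Prop :=
  IsLeast {w : ℕ | ∃ c ∈ C, c ≠ 0 ∧ wt c = w} d

/-!
Over a field containing a primitive `2n`-th root of unity `ζ` (as `F_q` does, since `2n ∣ q - 1`),
the negacyclic shift has the `n` distinct eigenvalues `ζ^-(2j+1)`, with eigenvectors
`e_j = (ζ^((2j+1)i))_i`. Its invariant subspaces, the negacyclic codes, are therefore exactly the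
spans of the sets `{e_j | j ∈ T}`. As `e_j ⬝ e_m` is `n ≠ 0` when `m = n - 1 - j` and `0` otherwise,
such a span is LCD iff `T` is closed under `j ↦ n - 1 - j`. There are `2 ^ ⌈n/2⌉` such `T`, and
`T = ∅` and `T = univ` give the two trivial codes.
-/

open Module Submodule Matrix

section Eigenbasis

variable {K V ι : Type*} [Field K] [AddCommGroup V] [Module K V] {f : End K V} {μ : ι → K}

theorem Module.End.smul_mem_of_sum_smul_mem {v : ι → V} (hμ : Function.Injective μ)
    (hv : ∀ i, f (v i) = μ i • v i) {p : Submodule K V} (hp : p ∈ f.invtSubmodule)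
    (s : Finset ι) (c : ι → K) (hs : ∑ i ∈ s, c i • v i ∈ p) : ∀ i ∈ s, c i • v i ∈ p := by
  classical
  induction s using Finset.induction_on generalizing c with
  | empty => simp
  | insert a s ha ih =>
    rw [Finset.sum_insert ha] at hs
    -- `f - μ a` kills the `a`-th term and rescales the others by nonzero factors
    have hrest : ∀ i ∈ s, c i • v i ∈ p := by
      have hshift : f (c a • v a + ∑ i ∈ s, c i • v i) - μ a • (c a • v a + ∑ i ∈ s, c i • v i)
          = ∑ i ∈ s, (c i * (μ i - μ a)) • v i := by
        simp only [map_add, map_sum, map_smul, hv, smul_add, Finset.smul_sum, smul_smul,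
          add_sub_add_comm, ← Finset.sum_sub_distrib, ← sub_smul]
        simp [mul_comm, mul_sub]
      have hmem := hshift ▸ p.sub_mem (hp hs) (p.smul_mem (μ a) hs)
      intro i hi
      have hne : μ i - μ a ≠ 0 := sub_ne_zero.2 (hμ.ne (by rintro rfl; exact ha hi))
      have := p.smul_mem (μ i - μ a)⁻¹ (ih _ hmem i hi)
      rwa [smul_smul, mul_left_comm, inv_mul_cancel₀ hne, mul_one] at this
    have hhead : c a • v a ∈ p := by
      simpa using p.sub_mem hs (p.sum_mem hrest)
    simpa [hhead] using hrest

theorem Module.End.span_image_mem_invtSubmodule {v : ι → V} (hv : ∀ i, f (v i) = μ i • v i)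
    (s : Set ι) : span K (v '' s) ∈ f.invtSubmodule := by
  rw [End.mem_invtSubmodule, span_le]
  rintro _ ⟨i, hi, rfl⟩
  show f (v i) ∈ span K (v '' s)
  rw [hv]
  exact smul_mem _ _ (subset_span ⟨i, hi, rfl⟩)

variable [Fintype ι]

theorem Module.Basis.eq_span_image_of_mem_invtSubmodule (b : Basis ι K V)
    (hμ : Function.Injective μ) (hb : ∀ i, f (b i) = μ i • b i) {p : Submodule K V}
    (hp : p ∈ f.invtSubmodule) : p = span K (b '' {i | b i ∈ p}) := by
  refine le_antisymm (fun x hx => ?_) (span_le.2 (by rintro _ ⟨i, hi, rfl⟩; exact hi))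
  rw [← b.sum_repr x]
  refine sum_mem fun i _ => ?_
  have hi := f.smul_mem_of_sum_smul_mem hμ hb hp Finset.univ (b.repr x) (by rwa [b.sum_repr])
    i (Finset.mem_univ i)
  by_cases h0 : b.repr x i = 0
  · simp [h0]
  · refine smul_mem _ _ (subset_span ⟨i, ?_, rfl⟩)
    simpa [smul_smul, h0] using p.smul_mem (b.repr x i)⁻¹ hi

open scoped Classical in
noncomputable def Module.Basis.invtSubmoduleEquivFinset (b : Basis ι K V)
    (hμ : Function.Injective μ) (hb : ∀ i, f (b i) = μ i • b i) :
    f.invtSubmodule ≃ Finset ι where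
  toFun p := {i | b i ∈ (p : Submodule K V)}
  invFun T := ⟨span K (b '' T), f.span_image_mem_invtSubmodule hb _⟩
  left_inv p := Subtype.ext (by simpa using (b.eq_span_image_of_mem_invtSubmodule hμ hb p.2).symm)
  right_inv T := by ext i; simp

end Eigenbasis

theorem isLCD_span_image_iff {F ι : Type*} [Field F] {n : ℕ} {e : ι → Fin n → F} {σ : ι → ι}
    (hσ : σ.Injective) (horth : ∀ j m, m ≠ σ j → e j ⬝ᵥ e m = 0)
    (hpair : ∀ j, e j ⬝ᵥ e (σ j) ≠ 0) (T : Finset ι) :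
    IsLCD (span F (e '' T)) ↔ ∀ j ∈ T, σ j ∈ T := by
  classical
  change (∀ x ∈ span F (e '' T), (∀ y ∈ span F (e '' T), x ⬝ᵥ y = 0) → x = 0) ↔ _
  constructor
  · intro hT j hj
    by_contra hσj
    have hej : e j = 0 := hT (e j) (subset_span ⟨j, hj, rfl⟩) fun y hy => by
      obtain ⟨c, rfl⟩ := (mem_span_image_finset_iff_exists_fun' F).1 hy
      rw [dotProduct_sum]
      refine Finset.sum_eq_zero fun m hm => ?_
      rw [dotProduct_smul, horth j m (by rintro rfl; exact hσj hm), smul_zero]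
    exact hpair j (by rw [hej, zero_dotProduct])
  · intro hT x hx hxT
    obtain ⟨c, rfl⟩ := (mem_span_image_finset_iff_exists_fun' F).1 hx
    refine Finset.sum_eq_zero fun m hm => ?_
    have h := hxT _ (subset_span ⟨σ m, hT m hm, rfl⟩)
    rw [sum_dotProduct, Finset.sum_eq_single m (fun k _ hkm => by
      rw [smul_dotProduct, horth k (σ m) (hσ.ne (Ne.symm hkm)), smul_zero])
      (fun h => absurd hm h), smul_dotProduct, smul_eq_mul] at h
    rw [(mul_eq_zero.1 h).resolve_right (hpair m), zero_smul]

theorem Fin.card_filter_forall_rev_mem (n : ℕ) :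
    #{T : Finset (Fin n) | ∀ j ∈ T, j.rev ∈ T} = 2 ^ ((n + 1) / 2) := by
  -- the indices `j < (n + 1) / 2` meet every `rev`-orbit exactly once
  set D : Finset (Fin n) := {j | (j : ℕ) < (n + 1) / 2}
  have hD : #D = (n + 1) / 2 := by rw [Fin.card_filter_val_lt]; omega
  have hcover : ∀ j : Fin n, j ∈ D ∨ j.rev ∈ D := by
    intro j; simp only [D, mem_filter, mem_univ, true_and, Fin.val_rev]; omega
  have hfix : ∀ j : Fin n, j ∈ D → j.rev ∈ D → j.rev = j := by
    intro j; simp only [D, mem_filter, mem_univ, true_and, Fin.ext_iff, Fin.val_rev]; omega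
  rw [← hD, ← card_powerset]
  refine card_nbij' (fun T => T ∩ D) (fun S => S ∪ S.image Fin.rev) ?_ ?_ ?_ ?_
  · intro T _
    simp
  · intro S _
    simp only [coe_filter, mem_univ, true_and, Set.mem_ofPred_eq, mem_union, mem_image]
    rintro j (hj | ⟨k, hk, rfl⟩)
    · exact Or.inr ⟨j, hj, rfl⟩
    · simpa using Or.inl hk
  · intro T hT
    simp only [coe_filter, mem_univ, true_and, Set.mem_ofPred_eq] at hT
    ext j
    simp only [mem_union, mem_inter, mem_image]
    constructor
    · rintro (⟨hj, -⟩ | ⟨k, ⟨hk, -⟩, rfl⟩)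
      · exact hj
      · exact hT k hk
    · intro hj
      rcases hcover j with h | h
      · exact Or.inl ⟨hj, h⟩
      · exact Or.inr ⟨j.rev, ⟨hT j hj, h⟩, Fin.rev_rev j⟩
  · intro S hS
    rw [mem_coe, mem_powerset] at hS
    ext j
    simp only [mem_inter, mem_union, mem_image]
    constructor
    · rintro ⟨hj | ⟨k, hk, rfl⟩, hjD⟩
      · exact hj
      · rwa [hfix k (hS hk) hjD]
    · intro hj
      exact ⟨Or.inl hj, hS hj⟩

section Negacyclic

variable {F : Type*} [Field F] {n : ℕ}

def negashiftLinearMap (F : Type*) [Field F] (n : ℕ) : End F (Fin n → F) where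
  toFun := negashift
  map_add' x y := by
    funext i
    simp only [negashift, Pi.add_apply]
    split <;> ring
  map_smul' c x := by
    funext i
    simp only [negashift, Pi.smul_apply, smul_eq_mul, RingHom.id_apply]
    split <;> ring

theorem negashift_pow_eq_inv_smul {r : F} (hr : r ^ n = -1) :
    negashift (fun i : Fin n => r ^ (i : ℕ)) = r⁻¹ • fun i : Fin n => r ^ (i : ℕ) := by
  funext i
  have hn : n = n - 1 + 1 := (Nat.succ_pred_eq_of_pos i.pos).symm
  have hr0 : r ≠ 0 := by rintro rfl; rw [hn, zero_pow (Nat.succ_ne_zero _)] at hr; simp at hr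
  simp only [negashift, Pi.smul_apply, smul_eq_mul]
  split
  · next h0 =>
    rw [h0, pow_zero, mul_one]
    refine eq_inv_of_mul_eq_one_left ?_
    rw [neg_mul, ← pow_succ, ← hn, hr, neg_neg]
  · next h0 =>
    obtain ⟨k, hk⟩ := Nat.exists_eq_add_one_of_ne_zero h0
    rw [hk, Nat.add_sub_cancel, pow_succ, mul_left_comm, inv_mul_cancel₀ hr0, mul_one]

theorem Fin.sum_pow_eq_zero {β : F} (hβ1 : β ≠ 1) (hβ : β ^ n = 1) :
    ∑ i : Fin n, β ^ (i : ℕ) = 0 := by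
  rw [Fin.sum_univ_eq_sum_range (β ^ ·), geom_sum_eq hβ1, hβ, sub_self, zero_div]

end Negacyclic

-- For `ζ` a primitive `2n`-th root of unity, the `ζ ^ (2j+1)`, `j < n`, are the roots of `X ^ n + 1`.
def negacyclicEigenvector {F : Type*} [Field F] {n : ℕ} (ζ : F) (j : Fin n) : Fin n → F :=
  fun i => (ζ ^ (2 * (j : ℕ) + 1)) ^ (i : ℕ)

namespace IsPrimitiveRoot

variable {F : Type*} [Field F] {n : ℕ} {ζ : F}

theorem pow_odd_pow_eq_neg_one (hζ : IsPrimitiveRoot ζ (2 * n)) (j : Fin n) :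
    (ζ ^ (2 * (j : ℕ) + 1)) ^ n = -1 := by
  have hζn : ζ ^ n = -1 := by
    have h2 := hζ.pow_of_dvd j.pos.ne' (dvd_mul_left n 2)
    rw [Nat.mul_div_cancel _ j.pos] at h2
    exact h2.eq_neg_one_of_two_right
  rw [← pow_mul, mul_comm, pow_mul, hζn, Odd.neg_one_pow ⟨j, rfl⟩]

theorem pow_odd_injective (hζ : IsPrimitiveRoot ζ (2 * n)) :
    Function.Injective fun j : Fin n => ζ ^ (2 * (j : ℕ) + 1) := by
  intro j m h
  have := hζ.pow_inj (by omega) (by omega) h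
  ext
  omega

theorem pow_odd_mul_pow_odd_eq_one_iff (hζ : IsPrimitiveRoot ζ (2 * n)) (j m : Fin n) :
    ζ ^ (2 * (j : ℕ) + 1) * ζ ^ (2 * (m : ℕ) + 1) = 1 ↔ m = j.rev := by
  rw [← pow_add, hζ.pow_eq_one_iff_dvd,
    show 2 * (j : ℕ) + 1 + (2 * m + 1) = 2 * (j + m + 1) by ring, Nat.mul_dvd_mul_iff_left two_pos, Fin.ext_iff, Fin.val_rev]
  constructor
  · intro h
    have := Nat.eq_of_dvd_of_lt_two_mul (by omega) h (by omega)
    omega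
  · intro h
    rw [show (j : ℕ) + m + 1 = n by omega]

theorem negashift_negacyclicEigenvector (hζ : IsPrimitiveRoot ζ (2 * n)) (j : Fin n) :
    negashiftLinearMap F n (negacyclicEigenvector ζ j) =
      (ζ ^ (2 * (j : ℕ) + 1))⁻¹ • negacyclicEigenvector ζ j :=
  negashift_pow_eq_inv_smul (hζ.pow_odd_pow_eq_neg_one j)

theorem dotProduct_negacyclicEigenvector_of_ne (hζ : IsPrimitiveRoot ζ (2 * n)) {j m : Fin n}
    (h : m ≠ j.rev) :
    negacyclicEigenvector ζ j ⬝ᵥ negacyclicEigenvector ζ m = 0 := by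
  simp only [dotProduct, negacyclicEigenvector, ← mul_pow]
  refine Fin.sum_pow_eq_zero (mt (hζ.pow_odd_mul_pow_odd_eq_one_iff j m).1 h) ?_
  rw [mul_pow, hζ.pow_odd_pow_eq_neg_one, hζ.pow_odd_pow_eq_neg_one, neg_one_mul, neg_neg]

theorem dotProduct_negacyclicEigenvector_rev (hζ : IsPrimitiveRoot ζ (2 * n)) (j : Fin n) :
    negacyclicEigenvector ζ j ⬝ᵥ negacyclicEigenvector ζ j.rev = n := by
  simp only [dotProduct, negacyclicEigenvector, ← mul_pow]
  rw [(hζ.pow_odd_mul_pow_odd_eq_one_iff j j.rev).2 rfl]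
  simp

theorem natCast_ne_zero (hζ : IsPrimitiveRoot ζ (2 * n)) [NeZero n] : (n : F) ≠ 0 := by
  have := hζ.neZero'
  exact right_ne_zero_of_mul (by exact_mod_cast this.out : (2 : F) * n ≠ 0)

theorem linearIndependent_negacyclicEigenvector (hζ : IsPrimitiveRoot ζ (2 * n)) :
    LinearIndependent F (negacyclicEigenvector ζ : Fin n → Fin n → F) :=
  (negashiftLinearMap F n).eigenvectors_linearIndependent' _
    (inv_injective.comp hζ.pow_odd_injective) _ fun j =>
      ⟨End.mem_eigenspace_iff.2 (hζ.negashift_negacyclicEigenvector j), fun h => by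
        simpa [negacyclicEigenvector] using congrFun h ⟨0, j.pos⟩⟩

theorem exists_basis_negacyclicEigenvector (hζ : IsPrimitiveRoot ζ (2 * n)) :
    ∃ b : Basis (Fin n) F (Fin n → F), ⇑b = negacyclicEigenvector ζ :=
  ⟨basisOfLinearIndependentOfCardEqFinrank' _ hζ.linearIndependent_negacyclicEigenvector (by simp),
    coe_basisOfLinearIndependentOfCardEqFinrank' ..⟩

end IsPrimitiveRoot

theorem IsPrimitiveRoot.card_nontrivial_negacyclic_isLCD {F : Type*} [Field F] {n : ℕ} {ζ : F}
    (hζ : IsPrimitiveRoot ζ (2 * n)) [NeZero n] :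
    Nat.card {C : Submodule F (Fin n → F) // IsNegacyclic C ∧ IsLCD C ∧ C ≠ ⊥ ∧ C ≠ ⊤} =
      2 ^ ((n + 1) / 2) - 2 := by
  obtain ⟨b, hbe⟩ := hζ.exists_basis_negacyclicEigenvector
  have hb (j : Fin n) : negashiftLinearMap F n (b j) = (ζ ^ (2 * (j : ℕ) + 1))⁻¹ • b j := by
    rw [hbe]
    exact hζ.negashift_negacyclicEigenvector j
  have hspan_inj : Function.Injective fun T : Finset (Fin n) => span F (b '' T) := fun T T' h => by
    ext i
    simpa using congrArg (b i ∈ ·) h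
  have hbot : span F (b '' ↑(∅ : Finset (Fin n))) = ⊥ := by simp
  have htop : span F (b '' ↑(univ : Finset (Fin n))) = ⊤ := by simp
  have hcodes (T : Finset (Fin n)) :
      (IsLCD (span F (b '' T)) ∧ span F (b '' T) ≠ ⊥ ∧ span F (b '' T) ≠ ⊤) ↔
        (∀ j ∈ T, j.rev ∈ T) ∧ T ≠ ∅ ∧ T ≠ univ := by
    rw [← hbot, ← htop, hspan_inj.ne_iff, hspan_inj.ne_iff, hbe,
      isLCD_span_image_iff Fin.rev_injective (fun j m => hζ.dotProduct_negacyclicEigenvector_of_ne)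
        fun j => by rw [hζ.dotProduct_negacyclicEigenvector_rev]; exact hζ.natCast_ne_zero]
  have hsplit : ({T | (∀ j ∈ T, j.rev ∈ T) ∧ T ≠ ∅ ∧ T ≠ univ} : Finset (Finset (Fin n))) =
      ({T | ∀ j ∈ T, j.rev ∈ T} : Finset (Finset (Fin n))) \ {∅, univ} := by
    ext T
    simp only [mem_filter, mem_univ, true_and, mem_sdiff, mem_insert, mem_singleton, not_or]
  calc Nat.card {C : Submodule F (Fin n → F) // IsNegacyclic C ∧ IsLCD C ∧ C ≠ ⊥ ∧ C ≠ ⊤}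
      = Nat.card {T : Finset (Fin n) // (∀ j ∈ T, j.rev ∈ T) ∧ T ≠ ∅ ∧ T ≠ univ} :=
        Nat.card_congr <| (Equiv.subtypeSubtypeEquivSubtypeInter _ _).symm.trans <|
          ((b.invtSubmoduleEquivFinset (inv_injective.comp hζ.pow_odd_injective) hb).symm
            |>.subtypeEquiv fun T => (hcodes T).symm).symm
    _ = #{T : Finset (Fin n) | ∀ j ∈ T, j.rev ∈ T} - #{∅, univ} := by
        rw [Nat.card_eq_fintype_card, Fintype.card_subtype, hsplit, card_sdiff_of_subset]
        simp [insert_subset_iff]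
    _ = 2 ^ ((n + 1) / 2) - 2 := by
        rw [Fin.card_filter_forall_rev_mem, card_pair univ_nonempty.ne_empty.symm]

theorem FiniteField.exists_isPrimitiveRoot {F : Type*} [Field F] [Fintype F] {k : ℕ}
    (hk : k ∣ Fintype.card F - 1) : ∃ ζ : F, IsPrimitiveRoot ζ k := by
  classical
  obtain ⟨g, hg⟩ := IsCyclic.exists_ofOrder_eq_natCard (α := Fˣ)
  rw [Nat.card_eq_fintype_card, Fintype.card_units] at hg
  have hq : Fintype.card F - 1 ≠ 0 := Nat.sub_ne_zero_of_lt Fintype.one_lt_card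
  have hζ := (hg ▸ IsPrimitiveRoot.orderOf g).pow_of_dvd
    (Nat.div_ne_zero_iff_of_dvd hk |>.2 ⟨hq, by rintro rfl; simp_all⟩) (Nat.div_dvd_of_dvd hk)
  rw [Nat.div_div_self hk hq] at hζ
  exact ⟨_, IsPrimitiveRoot.coe_units_iff.2 hζ⟩

theorem stmt_5_general (q : ℕ) (hqodd : Odd q)
    (F : Type) [Field F] [Fintype F] (hF : Fintype.card F = q)
    (n : ℕ) (hdvd : n ∣ (q - 1) / 2) :
    (Even n →
      Nat.card {C : Submodule F (Fin n → F) //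
          IsNegacyclic C ∧ IsLCD C ∧ C ≠ ⊥ ∧ C ≠ ⊤} =
        2 * (2 ^ ((n - 2) / 2) - 1)) ∧
    (Odd n →
      Nat.card {C : Submodule F (Fin n → F) //
          IsNegacyclic C ∧ IsLCD C ∧ C ≠ ⊥ ∧ C ≠ ⊤} =
        2 * (2 ^ ((n - 1) / 2) - 1)) := by
  have h2n : 2 * n ∣ Fintype.card F - 1 := by
    rw [hF, ← Nat.two_mul_div_two_of_even (Nat.Odd.sub_odd hqodd odd_one)]
    exact mul_dvd_mul_left 2 hdvd
  have hn : NeZero n := ⟨by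
    rintro rfl
    rw [mul_zero, zero_dvd_iff, Nat.sub_eq_zero_iff_le] at h2n
    exact Fintype.one_lt_card.not_ge h2n⟩
  obtain ⟨ζ, hζ⟩ := FiniteField.exists_isPrimitiveRoot h2n
  have hpow (m : ℕ) : 2 ^ (m + 1) - 2 = 2 * (2 ^ m - 1) := by rw [Nat.mul_sub_one, pow_succ']
  rw [hζ.card_nontrivial_negacyclic_isLCD]
  refine ⟨fun ⟨k, hk⟩ => ?_, fun ⟨k, hk⟩ => ?_⟩
  · rw [show (n + 1) / 2 = (n - 2) / 2 + 1 by have := hn.out; omega, hpow]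
  · rw [show (n + 1) / 2 = (n - 1) / 2 + 1 by omega, hpow]

theorem stmt_5 (q : ℕ) (hq : IsPrimePow q) (hqodd : Odd q)
    (F : Type) [Field F] [Fintype F] (hF : Fintype.card F = q)
    (n : ℕ) (hn : 3 ≤ n) (hdvd : n ∣ (q - 1) / 2) :
    (Even n →
      Nat.card {C : Submodule F (Fin n → F) //
          IsNegacyclic C ∧ IsLCD C ∧ C ≠ ⊥ ∧ C ≠ ⊤} =
        2 * (2 ^ ((n - 2) / 2) - 1)) ∧
    (Odd n →
      Nat.card {C : Submodule F (Fin n → F) //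
          IsNegacyclic C ∧ IsLCD C ∧ C ≠ ⊥ ∧ C ≠ ⊤} =
        2 * (2 ^ ((n - 1) / 2) - 1)) :=
  stmt_5_general q hqodd F hF n hdvd
end

section
/- Let q be an odd prime power with q ≡ 1 (mod 4), let γ be an odd positive divisor of q - 1, and set n = (q-1)/γ with n > 2. Then for every integer l with 0 ≤ l and 4γl ≤ q - 4γ - 1 there exists a negacyclic Hermitian LCD code over F_{q²} of length n, dimension n - 2l - 2 and minimum distance exactly 2l + 3; in particular this code is MDS. -/
open Finset

/-
Let `α` be a primitive `2n`-th root of unity in `E` (it exists since `2n ∣ q² - 1`), `ω = α²`,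
`β = α^(n/2 + 2l + 3)` and `k = n - 2l - 2`. The code is the generalized Reed–Solomon code
`{(β^i P(ω^i))_{i<n} : deg P < k}`, so it has dimension `k` and minimum distance
`n - k + 1 = 2l + 3`. It is spanned by the geometric vectors `((βω^j)^i)_i`, `j < k`; since
`(βω^j)^n = -1`, the negacyclic shift multiplies each of them by `(βω^j)⁻¹`. Because `n ∣ q - 1`
and `γ` is odd, `ω^q = ω` and `β^(q+1) = -β² = ω^(2l+3)`, so the Hermitian Gram matrix of these
generators has entries `∑_i ω^((j + j' + 2l + 3) i)`, which vanish unless `j + j' = k - 1`: it is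
`n` times the anti-diagonal permutation matrix, hence invertible, and the code meets its
Hermitian dual trivially.
-/

open Polynomial

open scoped Classical in
lemma wt_add_card_filter_eq_zero {F : Type*} [Zero F] {n : ℕ} (c : Fin n → F) :
    wt c + #{i | c i = 0} = n := by
  rw [wt, add_comm, Finset.card_filter_add_card_filter_not, Finset.card_univ, Fintype.card_fin]

noncomputable section GRS

variable {F : Type*} [Field F] {n : ℕ}

def grsEval (v x : Fin n → F) : F[X] →ₗ[F] Fin n → F :=
  LinearMap.pi fun i => v i • leval (x i)

@[simp] lemma grsEval_apply (v x : Fin n → F) (P : F[X]) (i : Fin n) :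
    grsEval v x P i = v i * P.eval (x i) := rfl

def grsCode (v x : Fin n → F) (k : ℕ) : Submodule F (Fin n → F) :=
  (degreeLT F k).map (grsEval v x)

lemma grsCode_eq_span (v x : Fin n → F) (k : ℕ) :
    grsCode v x k = Submodule.span F (Set.range fun j : Fin k => grsEval v x (X ^ (j : ℕ))) := by
  classical
  rw [grsCode, degreeLT_eq_span_X_pow, Submodule.map_span]
  congr 1
  ext c
  simp [Fin.exists_iff]

variable {v x : Fin n → F} {k : ℕ}

open scoped Classical in
lemma card_filter_grsEval_eq_zero_lt (hv : ∀ i, v i ≠ 0) (hx : Function.Injective x)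
    {P : F[X]} (hP : P ∈ degreeLT F k) (hP0 : P ≠ 0) :
    #{i | grsEval v x P i = 0} < k := by
  have hzeros : #{i | grsEval v x P i = 0} ≤ P.natDegree := by
    rw [← Finset.card_image_of_injective _ hx]
    refine Polynomial.card_le_degree_of_subset_roots fun a ha => ?_
    rw [Finset.mem_val, Finset.mem_image] at ha
    obtain ⟨i, hi, rfl⟩ := ha
    simp only [Finset.mem_filter, grsEval_apply, mul_eq_zero, hv i, false_or] at hi
    exact (mem_roots hP0).mpr hi.2
  exact hzeros.trans_lt <| (natDegree_lt_iff_degree_lt hP0).mpr (mem_degreeLT.mp hP)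

lemma finrank_grsCode (hv : ∀ i, v i ≠ 0) (hx : Function.Injective x) (hk : k ≤ n) :
    Module.finrank F (grsCode v x k) = k := by
  classical
  have hinj : Function.Injective ((grsEval v x).domRestrict (degreeLT F k)) := by
    rw [← LinearMap.ker_eq_bot, LinearMap.ker_eq_bot']
    intro P hP
    by_contra hne
    have hzero : ∀ i, grsEval v x P i = 0 := congrFun hP
    have := card_filter_grsEval_eq_zero_lt hv hx P.2 (by simpa using hne)
    rw [Finset.filter_true_of_mem fun i _ => hzero i, Finset.card_univ,
      Fintype.card_fin] at this
    omega
  rw [grsCode, ← LinearMap.range_domRestrict, LinearMap.finrank_range_of_inj hinj,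
    (degreeLTEquiv F k).finrank_eq, Module.finrank_fin_fun]

lemma le_wt_of_mem_grsCode (hv : ∀ i, v i ≠ 0) (hx : Function.Injective x)
    {c : Fin n → F} (hc : c ∈ grsCode v x k) (hc0 : c ≠ 0) : n + 1 - k ≤ wt c := by
  obtain ⟨P, hP, rfl⟩ := Submodule.mem_map.mp hc
  have hP0 : P ≠ 0 := by rintro rfl; exact hc0 (map_zero _)
  have := card_filter_grsEval_eq_zero_lt hv hx hP hP0
  have := wt_add_card_filter_eq_zero (grsEval v x P)
  omega

lemma exists_mem_grsCode_wt_eq (hv : ∀ i, v i ≠ 0) (hx : Function.Injective x)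
    (hk0 : 0 < k) (hk : k ≤ n) :
    ∃ c ∈ grsCode v x k, c ≠ 0 ∧ wt c = n + 1 - k := by
  classical
  obtain ⟨s, -, hs⟩ := Finset.exists_subset_card_eq (s := (Finset.univ : Finset (Fin n)))
    (n := k - 1) (by simp only [card_univ, Fintype.card_fin]; omega)
  have hzero : ∀ i, grsEval v x (∏ t ∈ s, (X - C (x t))) i = 0 ↔ i ∈ s := by
    intro i
    simp [eval_prod, Finset.prod_eq_zero_iff, hv i, sub_eq_zero, hx.eq_iff]
  have hwt : wt (grsEval v x (∏ t ∈ s, (X - C (x t)))) = n + 1 - k := by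
    have := wt_add_card_filter_eq_zero (grsEval v x (∏ t ∈ s, (X - C (x t))))
    simp only [hzero, Finset.filter_mem_eq_inter, Finset.univ_inter, hs] at this
    omega
  refine ⟨_, Submodule.mem_map_of_mem ?_, fun h0 => ?_, hwt⟩
  · rw [mem_degreeLT, degree_eq_natDegree
      (monic_prod_of_monic _ _ fun t _ => monic_X_sub_C _).ne_zero]
    rw [natDegree_finsetProd_X_sub_C_eq_card, hs, Nat.cast_lt]
    omega
  · rw [h0] at hwt
    simp only [wt, Pi.zero_apply, ne_eq, not_true_eq_false, filter_false, card_empty] at hwt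
    omega

lemma hasMinDist_grsCode (hv : ∀ i, v i ≠ 0) (hx : Function.Injective x)
    (hk0 : 0 < k) (hk : k ≤ n) :
    HasMinDist (grsCode v x k : Set (Fin n → F)) (n + 1 - k) := by
  refine ⟨exists_mem_grsCode_wt_eq hv hx hk0 hk, ?_⟩
  rintro _ ⟨c, hc, hc0, rfl⟩
  exact le_wt_of_mem_grsCode hv hx hc hc0

end GRS

section Negacyclic

variable {F : Type*} [Field F] {n : ℕ}

def negashiftₗ : (Fin n → F) →ₗ[F] Fin n → F where
  toFun := negashift
  map_add' x y := by
    funext i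
    simp only [negashift, Pi.add_apply]
    split <;> ring
  map_smul' a x := by
    funext i
    simp only [negashift, Pi.smul_apply, smul_eq_mul, RingHom.id_apply]
    split <;> ring

lemma isNegacyclic_span {s : Set (Fin n → F)} (hs : ∀ c ∈ s, negashift c ∈ Submodule.span F s) :
    IsNegacyclic (Submodule.span F s) :=
  fun _ hc => (Submodule.span_le (p := (Submodule.span F s).comap negashiftₗ)).mpr hs hc

def powVec (a : F) : Fin n → F := fun i => a ^ (i : ℕ)

lemma negashift_powVec {a : F} (ha : a ^ n = -1) :
    negashift (powVec a : Fin n → F) = a⁻¹ • powVec a := by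
  funext i
  have hn : n = n - 1 + 1 := by have := i.pos; omega
  have ha0 : a ≠ 0 := by
    rintro rfl
    rw [hn, zero_pow (Nat.succ_ne_zero _)] at ha
    exact zero_ne_one (neg_eq_zero.mp ha.symm).symm
  simp only [negashift, powVec, Pi.smul_apply, smul_eq_mul]
  split
  · next hi =>
    have hlast : a ^ (n - 1) * a = -1 := by rw [← pow_succ, ← hn, ha]
    rw [hi, pow_zero, mul_one]
    exact eq_inv_of_mul_eq_one_left (by rw [neg_mul, hlast, neg_neg])
  · next hi =>
    rw [eq_inv_mul_iff_mul_eq₀ ha0, ← pow_succ']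
    congr 1
    omega

lemma grsEval_powVec_X_pow (β ω : F) (j : ℕ) :
    grsEval (powVec β) (powVec ω) (X ^ j) = (powVec (β * ω ^ j) : Fin n → F) := by
  funext i
  simp [powVec, mul_pow, ← pow_mul, mul_comm]

lemma isNegacyclic_grsCode_powVec {β ω : F} (hβ : β ^ n = -1) (hω : ω ^ n = 1) (k : ℕ) :
    IsNegacyclic (grsCode (n := n) (powVec β) (powVec ω) k) := by
  rw [grsCode_eq_span]
  refine isNegacyclic_span ?_
  rintro _ ⟨j, rfl⟩
  dsimp only
  have hroot : (β * ω ^ (j : ℕ)) ^ n = -1 := by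
    rw [mul_pow, ← pow_mul, mul_comm (j : ℕ), pow_mul, hω, one_pow, mul_one, hβ]
  rw [grsEval_powVec_X_pow, negashift_powVec hroot, ← grsEval_powVec_X_pow]
  exact Submodule.smul_mem _ _ (Submodule.subset_span ⟨j, rfl⟩)

end Negacyclic

lemma dvd_val_add_val_add_iff_rev_eq {n k s : ℕ} (hks : k + s = n + 1) (hs : 0 < s)
    (j j' : Fin k) : n ∣ (j : ℕ) + j' + s ↔ j.rev = j' := by
  rw [Fin.ext_iff, Fin.val_rev]
  have := j.isLt
  have := j'.isLt
  constructor
  · rintro ⟨c, hc⟩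
    rcases c with _ | _ | c
    · omega
    · omega
    · nlinarith
  · intro h
    exact ⟨1, by omega⟩

section Hermitian

variable {F : Type*} [Field F] {n : ℕ}

def hermGram (q : ℕ) {ι : Type*} (w : ι → Fin n → F) : Matrix ι ι F :=
  Matrix.of fun j j' => ∑ i, w j i * w j' i ^ q

lemma isHermLCD_span_of_isUnit_hermGram (q : ℕ) {ι : Type*} [Fintype ι] [DecidableEq ι]
    (w : ι → Fin n → F) (hG : IsUnit (hermGram q w)) :
    IsHermLCD q (Submodule.span F (Set.range w)) := by
  intro c hc hperp
  obtain ⟨a, rfl⟩ := (Submodule.mem_span_range_iff_exists_fun F).mp hc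
  have hvecMul : Matrix.vecMul a (hermGram q w) = Matrix.vecMul 0 (hermGram q w) := by
    funext j'
    rw [Matrix.zero_vecMul, Pi.zero_apply, ← hperp (w j') (Submodule.subset_span ⟨j', rfl⟩)]
    simp only [Matrix.vecMul, dotProduct, hermGram, Matrix.of_apply, Finset.sum_apply,
      Pi.smul_apply, smul_eq_mul, Finset.mul_sum, Finset.sum_mul, mul_assoc]
    exact Finset.sum_comm
  rw [Matrix.vecMul_injective_of_isUnit hG hvecMul]
  simp

lemma IsPrimitiveRoot.sum_pow_pow_eq_ite {ω : F} (hω : IsPrimitiveRoot ω n) (t : ℕ) :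
    ∑ i : Fin n, (ω ^ t) ^ (i : ℕ) = if n ∣ t then (n : F) else 0 := by
  rw [Fin.sum_univ_eq_sum_range (fun i => (ω ^ t) ^ i)]
  split_ifs with h
  · simp [(hω.pow_eq_one_iff_dvd t).mpr h]
  · rw [geom_sum_eq (mt (hω.pow_eq_one_iff_dvd t).mp h), ← pow_mul, mul_comm, pow_mul,
      hω.pow_eq_one, one_pow, sub_self, zero_div]

lemma hermGram_grsEval_powVec {q s k : ℕ} {β ω : F} (hω : IsPrimitiveRoot ω n)
    (hωq : ω ^ q = ω) (hβq : β ^ (q + 1) = ω ^ s) (hks : k + s = n + 1) (hs : 0 < s) :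
    hermGram q (fun j : Fin k => grsEval (n := n) (powVec β) (powVec ω) (X ^ (j : ℕ))) =
      (n : F) • Fin.revPerm.permMatrix F := by
  ext j j'
  have hterm : ∀ i : Fin n, (β * ω ^ (j : ℕ)) ^ (i : ℕ) * ((β * ω ^ (j' : ℕ)) ^ (i : ℕ)) ^ q
      = (ω ^ ((j : ℕ) + j' + s)) ^ (i : ℕ) := by
    intro i
    rw [← pow_mul, mul_comm _ q, pow_mul, ← mul_pow, mul_pow β, ← pow_mul, mul_comm _ q,
      pow_mul, hωq, mul_mul_mul_comm, ← pow_succ', hβq, ← pow_add, ← pow_add]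
    ring_nf
  simp only [hermGram, Matrix.of_apply, grsEval_powVec_X_pow, powVec, hterm,
    hω.sum_pow_pow_eq_ite, dvd_val_add_val_add_iff_rev_eq hks hs, Matrix.smul_apply,
    PEquiv.toMatrix_apply, Equiv.toPEquiv_apply, Option.mem_def, Option.some.injEq,
    Fin.revPerm_apply, smul_eq_mul, mul_ite, mul_one, mul_zero]

lemma isHermLCD_grsCode_powVec {q s k : ℕ} {β ω : F} (hω : IsPrimitiveRoot ω n) (hn : 0 < n)
    (hωq : ω ^ q = ω) (hβq : β ^ (q + 1) = ω ^ s) (hks : k + s = n + 1) (hs : 0 < s) :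
    IsHermLCD q (grsCode (n := n) (powVec β) (powVec ω) k) := by
  have : NeZero n := ⟨hn.ne'⟩
  rw [grsCode_eq_span]
  refine isHermLCD_span_of_isUnit_hermGram q _ ?_
  rw [hermGram_grsEval_powVec hω hωq hβq hks hs, Matrix.isUnit_iff_isUnit_det, Matrix.det_smul,
    Matrix.det_permutation]
  exact (hω.neZero'.out.isUnit.pow _).mul ((Equiv.Perm.sign _).isUnit.map (Int.castRingHom F))

end Hermitian

theorem IsPrimitiveRoot.pow_eq_neg_one_of_two_mul {R : Type*} [CommRing R] [NoZeroDivisors R]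
    {α : R} {n : ℕ} (hα : IsPrimitiveRoot α (2 * n)) (hn : 0 < n) : α ^ n = -1 :=
  (hα.pow (by omega) (mul_comm 2 n)).eq_neg_one_of_two_right

lemma exists_isPrimitiveRoot_of_dvd_card_sub_one {F : Type*} [Field F] [Fintype F] {N : ℕ}
    (hN : N ∣ Fintype.card F - 1) : ∃ ζ : F, IsPrimitiveRoot ζ N := by
  classical
  obtain ⟨g, hg⟩ := IsCyclic.exists_ofOrder_eq_natCard (α := Fˣ)
  have hg' : IsPrimitiveRoot (g : F) (Fintype.card F - 1) := by
    rw [← Fintype.card_units, ← Nat.card_eq_fintype_card, ← hg]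
    exact IsPrimitiveRoot.coe_units_iff.mpr (.orderOf g)
  obtain ⟨d, hd⟩ := hN
  exact ⟨_, hg'.pow (by have := Fintype.one_lt_card (α := F); omega) (hd.trans (mul_comm _ _))⟩

theorem grsCode_powVec_isNegacyclic_isHermLCD_mds {F : Type*} [Field F] {n q s k : ℕ} {β ω : F}
    (hω : IsPrimitiveRoot ω n) (hβ : β ^ n = -1) (hωq : ω ^ q = ω) (hβq : β ^ (q + 1) = ω ^ s)
    (hks : k + s = n + 1) (hs : 0 < s) (hk : 0 < k) :
    IsNegacyclic (grsCode (n := n) (powVec β) (powVec ω) k) ∧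
      IsHermLCD q (grsCode (n := n) (powVec β) (powVec ω) k) ∧
      Module.finrank F (grsCode (n := n) (powVec β) (powVec ω) k) = k ∧
      HasMinDist (grsCode (n := n) (powVec β) (powVec ω) k : Set (Fin n → F)) s := by
  have hv : ∀ i : Fin n, powVec β i ≠ 0 := fun i => pow_ne_zero _ <| by
    rintro rfl
    simp [zero_pow (by omega : n ≠ 0)] at hβ
  have hx : Function.Injective (powVec ω : Fin n → F) := fun i j h =>
    Fin.ext (hω.pow_inj i.2 j.2 h)
  refine ⟨isNegacyclic_grsCode_powVec hβ hω.pow_eq_one k,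
    isHermLCD_grsCode_powVec hω (by omega) hωq hβq hks hs, finrank_grsCode hv hx (by omega), ?_⟩
  convert hasMinDist_grsCode hv hx hk (by omega) using 1
  omega

theorem stmt_10_general (q : ℕ) (hmod : q % 4 = 1)
    (E : Type) [Field E] [Fintype E] (hE : Fintype.card E = q ^ 2)
    (γ : ℕ) (hγpar : Odd γ) (hdvd : γ ∣ q - 1)
    (n : ℕ) (hn : n = (q - 1) / γ)
    (l : ℕ) (hl : 4 * γ * l + 4 * γ + 1 ≤ q) :
    ∃ C : Submodule E (Fin n → E),
      IsNegacyclic C ∧ IsHermLCD q C ∧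
      Module.finrank E C = n - 2 * l - 2 ∧
      HasMinDist (C : Set (Fin n → E)) (2 * l + 3) := by
  have hq : q = γ * n + 1 := by rw [hn, Nat.mul_div_cancel' hdvd]; omega
  obtain ⟨m, hm⟩ : 4 ∣ n :=
    (Nat.Coprime.pow_left 2 (Nat.coprime_two_left.mpr hγpar)).dvd_of_dvd_mul_left (by omega)
  have hln : 4 * l + 4 ≤ n := by nlinarith [hγpar.pos]
  obtain ⟨α, hα⟩ : ∃ α : E, IsPrimitiveRoot α (2 * n) := by
    refine exists_isPrimitiveRoot_of_dvd_card_sub_one ⟨γ * (2 * γ * m + 1), ?_⟩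
    rw [hE, hq, hm, Nat.sub_eq_iff_eq_add (Nat.one_le_pow _ _ (by omega))]
    ring
  have hαn := hα.pow_eq_neg_one_of_two_mul (by omega)
  have hω : IsPrimitiveRoot (α ^ 2) n := hα.pow (by omega) (by ring)
  have hβ : (α ^ (2 * m + 2 * l + 3)) ^ n = -1 := by
    rw [← pow_mul, mul_comm, pow_mul, hαn, Odd.neg_one_pow ⟨m + l + 1, by ring⟩]
  have hωq : (α ^ 2) ^ q = α ^ 2 := by rw [hq, pow_succ, pow_mul', hω.pow_eq_one, one_pow, one_mul]
  have hβq : (α ^ (2 * m + 2 * l + 3)) ^ (q + 1) = (α ^ 2) ^ (2 * l + 3) := by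
    rw [hq, show γ * n + 1 + 1 = n * γ + 2 by ring, pow_add, pow_mul, hβ, hγpar.neg_one_pow,
      ← pow_mul, ← pow_mul, show (2 * m + 2 * l + 3) * 2 = n + 2 * (2 * l + 3) by omega, pow_add,
      hαn]
    ring
  exact ⟨_, grsCode_powVec_isNegacyclic_isHermLCD_mds hω hβ hωq hβq
    (by omega) (by omega) (by omega)⟩

theorem stmt_10 (q : ℕ) (hq : IsPrimePow q) (hqodd : Odd q) (hmod : q % 4 = 1)
    (E : Type) [Field E] [Fintype E] (hE : Fintype.card E = q ^ 2)
    (γ : ℕ) (hγ : 0 < γ) (hγpar : Odd γ) (hdvd : γ ∣ q - 1)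
    (n : ℕ) (hn : n = (q - 1) / γ) (hn2 : 2 < n)
    (l : ℕ) (hl : 4 * γ * l + 4 * γ + 1 ≤ q) :
    ∃ C : Submodule E (Fin n → E),
      IsNegacyclic C ∧ IsHermLCD q C ∧
      Module.finrank E C = n - 2 * l - 2 ∧
      HasMinDist (C : Set (Fin n → E)) (2 * l + 3) :=
  stmt_10_general q hmod E hE γ hγpar hdvd n hn l hl
end

section
/- Let q be an odd prime power with q ≡ 3 (mod 4), let γ be an odd positive divisor of q - 1, and set n = (q-1)/γ with n > 2. Then for every integer l with 0 ≤ l and 4γl ≤ q - 2γ - 1 there exists a negacyclic Hermitian LCD code over F_{q²} of length n, dimension n - 2l - 1 and minimum distance exactly 2l + 2; in particular this code is MDS. -/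
/-!
Since `q ≡ 3 (mod 4)` and `γ` is odd, `n = 4u + 2`, and `2n ∣ q² - 1` gives a primitive
`2n`-th root of unity `ω ∈ E`; the roots of `X ^ n + 1` are the `ω ^ (2j + 1)`. Take `C` the
negacyclic code with defining set `J = {u - l, …, u + l}`. Its `2l + 1` consecutive zeros give
`d ≥ 2l + 2` (BCH bound, via Lagrange interpolation), and the Singleton bound gives equality.
As `q ≡ n + 1 (mod 2n)` we have `ω ^ q = -ω`, and `J` is stable under `k ↦ 2u - k (mod n)`:
for `k ∉ J` and `m = 2u - k ∉ J` the word `(ω ^ (-(2m + 1) i))ᵢ` lies in `C`, and its Hermitian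
product with `x` is the value of `x` at `ω ^ (2k + 1)`. So a codeword Hermitian-orthogonal to `C`
vanishes at all roots of `X ^ n + 1`, hence is zero.
-/

open Finset

open Polynomial

section Codes

variable {K : Type*} [Field K] {n : ℕ}

theorem wt_le (x : Fin n → K) : wt x ≤ n := by
  classical
  simpa [wt] using card_filter_le univ fun i => x i ≠ 0

theorem sum_eval_mul_eq_zero {a x : Fin n → K} {δ : ℕ} (hx : ∀ t < δ, ∑ i, a i ^ t * x i = 0)
    {p : K[X]} (hp : p.natDegree < δ) : ∑ i, p.eval (a i) * x i = 0 := by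
  simp_rw [eval_eq_sum_range, sum_mul, mul_assoc]
  rw [sum_comm]
  refine sum_eq_zero fun t ht => ?_
  rw [← mul_sum, hx t (by rw [mem_range] at ht; omega), mul_zero]

theorem eq_zero_of_sum_pow_mul_eq_zero {a x : Fin n → K} (ha : Function.Injective a) {δ : ℕ}
    (hx : ∀ t < δ, ∑ i, a i ^ t * x i = 0) (hwt : wt x ≤ δ) : x = 0 := by
  classical
  by_contra hne
  obtain ⟨s, hs⟩ : ∃ s, x s ≠ 0 := Function.ne_iff.mp hne
  set S : Finset (Fin n) := {i | x i ≠ 0}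
  have hsS : s ∈ S := by simpa [S] using hs
  have hS : #S ≤ δ := by simpa [wt, S] using hwt
  have hinj : Set.InjOn a S := ha.injOn
  have hdeg : (Lagrange.basis S a s).natDegree < δ := by
    rw [Lagrange.natDegree_basis hinj hsS]
    have := card_pos.mpr ⟨s, hsS⟩
    omega
  have hsum := sum_eval_mul_eq_zero hx hdeg
  rw [sum_eq_single s, Lagrange.eval_basis_self hinj hsS, one_mul] at hsum
  · exact hs hsum
  · intro i _ his
    by_cases hi : i ∈ S
    · rw [Lagrange.eval_basis_of_ne his.symm hi, zero_mul]
    · simp only [S, mem_filter, mem_univ, true_and, not_not] at hi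
      rw [hi, mul_zero]
  · simp

theorem exists_ne_zero_wt_add_finrank_le (C : Submodule K (Fin n → K))
    (hC : 0 < Module.finrank K C) :
    ∃ c ∈ C, c ≠ 0 ∧ wt c + Module.finrank K C ≤ n + 1 := by
  classical
  have hCn : Module.finrank K C ≤ n := by simpa using C.finrank_le
  obtain ⟨S, -, hS⟩ := exists_subset_card_eq (s := (univ : Finset (Fin n)))
    (n := Module.finrank K C - 1) (by simp; omega)
  let r : C →ₗ[K] (S → K) := LinearMap.funLeft K K Subtype.val ∘ₗ C.subtype
  obtain ⟨⟨c, hc⟩, hker, hc0⟩ := (Submodule.ne_bot_iff _).mp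
    (LinearMap.ker_ne_bot_of_finrank_lt (f := r) (by simp [hS]; omega))
  have hcS : ∀ i ∈ S, c i = 0 := fun i hi => congrFun (LinearMap.mem_ker.mp hker) ⟨i, hi⟩
  have hwt : wt c ≤ #(univ \ S) := by
    unfold wt
    exact card_le_card fun i hi => by
      simp only [mem_filter, mem_univ, true_and, mem_sdiff] at hi ⊢
      exact fun hiS => hi (hcS i hiS)
  rw [card_sdiff_of_subset (subset_univ S), card_univ, Fintype.card_fin, hS] at hwt
  exact ⟨c, hc, by simpa using hc0, by omega⟩

theorem hasMinDist_of_forall_le_wt (C : Submodule K (Fin n → K)) {d : ℕ}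
    (hd : d + Module.finrank K C = n + 1) (hC : 0 < Module.finrank K C)
    (hwt : ∀ c ∈ C, c ≠ 0 → d ≤ wt c) : HasMinDist (C : Set (Fin n → K)) d := by
  refine ⟨?_, fun w ⟨c, hc, hc0, hcw⟩ => hcw ▸ hwt c hc hc0⟩
  obtain ⟨c, hc, hc0, hle⟩ := exists_ne_zero_wt_add_finrank_le C hC
  exact ⟨c, hc, hc0, le_antisymm (by omega) (hwt c hc hc0)⟩

end Codes

section NegacyclicCode

variable {K : Type*} [Field K] {n : ℕ}

def wordEval (α : K) : (Fin n → K) →ₗ[K] K where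
  toFun x := ∑ i : Fin n, α ^ (i : ℕ) * x i
  map_add' x y := by simp only [Pi.add_apply, mul_add, sum_add_distrib]
  map_smul' c x := by
    simp only [Pi.smul_apply, smul_eq_mul, RingHom.id_apply, mul_sum, mul_left_comm]

theorem wordEval_apply (α : K) (x : Fin n → K) :
    wordEval α x = ∑ i : Fin n, α ^ (i : ℕ) * x i :=
  rfl

theorem wordEval_negashift {α : K} (hα : α ^ n = -1) (x : Fin n → K) :
    wordEval α (negashift x) = α * wordEval α x := by
  cases n with
  | zero => simp [wordEval_apply]
  | succ m =>
    have h0 : negashift x 0 = -x (Fin.last m) := rfl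
    have hsucc (i : Fin m) : negashift x i.succ = x i.castSucc := dif_neg (Nat.succ_ne_zero i)
    rw [wordEval_apply, wordEval_apply, Fin.sum_univ_succ,
      Fin.sum_univ_castSucc (f := fun i => α ^ (i : ℕ) * x i)]
    simp only [h0, hsucc, Fin.val_zero, Fin.val_succ, Fin.val_castSucc, Fin.val_last, pow_zero,
      one_mul, mul_add, mul_sum, pow_succ', mul_assoc]
    linear_combination (-x (Fin.last m)) * hα

/-- Identifying a word with a polynomial of degree `< n`, the negacyclic code whose defining set
(zeros among the roots `ω ^ (2 * j + 1)` of `X ^ n + 1`) is `J`. -/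
def negacyclicCode (ω : K) (J : Finset ℕ) : Submodule K (Fin n → K) :=
  LinearMap.ker (LinearMap.pi fun j : J => wordEval (ω ^ (2 * (j : ℕ) + 1)))

variable {ω : K} {J : Finset ℕ}

theorem mem_negacyclicCode {x : Fin n → K} :
    x ∈ negacyclicCode ω J ↔ ∀ j ∈ J, wordEval (ω ^ (2 * j + 1)) x = 0 := by
  simp [negacyclicCode, funext_iff]

theorem pow_two_mul_add_one_pow_eq_neg_one (hω : ω ^ n = -1) (j : ℕ) :
    (ω ^ (2 * j + 1)) ^ n = -1 := by
  rw [← pow_mul, mul_comm, pow_mul, hω, Odd.neg_one_pow ⟨j, rfl⟩]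

theorem isNegacyclic_negacyclicCode (hω : ω ^ n = -1) (J : Finset ℕ) :
    IsNegacyclic (negacyclicCode (n := n) ω J) := by
  intro c hc
  rw [mem_negacyclicCode] at hc ⊢
  intro j hj
  rw [wordEval_negashift (pow_two_mul_add_one_pow_eq_neg_one hω j), hc j hj, mul_zero]

end NegacyclicCode

section PrimitiveRoot

variable {K : Type*} [Field K] {n : ℕ} {ω : K} {J : Finset ℕ}

theorem IsPrimitiveRoot.pow_eq_neg_one (hω : IsPrimitiveRoot ω (2 * n)) (hn : n ≠ 0) :
    ω ^ n = -1 := by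
  have h2 := hω.pow_of_dvd hn (dvd_mul_left n 2)
  rw [Nat.mul_div_cancel _ (Nat.pos_of_ne_zero hn)] at h2
  exact h2.eq_neg_one_of_two_right

theorem eq_zero_of_mem_negacyclicCode_of_wt_le (hω : IsPrimitiveRoot ω (2 * n)) {j₀ δ : ℕ}
    (hJ : ∀ t < δ, j₀ + t ∈ J) {x : Fin n → K} (hx : x ∈ negacyclicCode ω J)
    (hwt : wt x ≤ δ) : x = 0 := by
  classical
  -- consecutive zeros `ω ^ (2 * (j₀ + t) + 1)` turn into a Vandermonde system in the `ω ^ (2 * i)`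
  set z : Fin n → K := fun i => ω ^ ((2 * j₀ + 1) * (i : ℕ)) * x i
  have hinj : Function.Injective fun i : Fin n => ω ^ (2 * (i : ℕ)) := fun i j hij =>
    Fin.ext (by have := hω.pow_inj (by omega) (by omega) hij; omega)
  have hz : ∀ t < δ, ∑ i : Fin n, (ω ^ (2 * (i : ℕ))) ^ t * z i = 0 := by
    intro t ht
    rw [← mem_negacyclicCode.mp hx _ (hJ t ht), wordEval_apply]
    refine sum_congr rfl fun i _ => ?_
    rw [← mul_assoc, ← pow_mul, ← pow_mul, ← pow_add]
    ring_nf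
  have hwtz : wt z ≤ δ := le_trans (card_le_card fun i hi => by
    simp only [mem_filter, mem_univ, true_and, z] at hi ⊢
    exact right_ne_zero_of_mul hi) hwt
  funext i
  have hz0 := congrFun (eq_zero_of_sum_pow_mul_eq_zero hinj hz hwtz) i
  exact (mul_eq_zero.mp hz0).resolve_left (pow_ne_zero _ (hω.ne_zero (by have := i.pos; omega)))

theorem eq_zero_of_forall_wordEval_eq_zero (hω : IsPrimitiveRoot ω (2 * n)) {x : Fin n → K}
    (hx : ∀ k < n, wordEval (ω ^ (2 * k + 1)) x = 0) : x = 0 :=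
  eq_zero_of_mem_negacyclicCode_of_wt_le hω (J := range n) (j₀ := 0)
    (fun t ht => by simpa using ht) (mem_negacyclicCode.mpr fun k hk => hx k (mem_range.mp hk))
    (wt_le x)

theorem finrank_negacyclicCode (hω : IsPrimitiveRoot ω (2 * n)) (hJ : J ⊆ range n) :
    Module.finrank K (negacyclicCode (n := n) ω J) = n - #J := by
  let Φ : (Fin n → K) →ₗ[K] (Fin n → K) :=
    LinearMap.pi fun k : Fin n => wordEval (ω ^ (2 * (k : ℕ) + 1))
  have hΦ : Function.Surjective Φ := LinearMap.surjective_of_injective <|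
    (injective_iff_map_eq_zero Φ).mpr fun x hx =>
      eq_zero_of_forall_wordEval_eq_zero hω fun k hk => congrFun hx ⟨k, hk⟩
  let ι : J → Fin n := fun j => ⟨j, mem_range.mp (hJ j.2)⟩
  have hι : Function.Injective ι := fun i j hij => Subtype.ext (congrArg Fin.val hij)
  have hsurj : Function.Surjective (LinearMap.funLeft K K ι ∘ₗ Φ) :=
    (LinearMap.funLeft_surjective_of_injective K K ι hι).comp hΦ
  have hrank := (LinearMap.funLeft K K ι ∘ₗ Φ).finrank_range_add_finrank_ker
  rw [LinearMap.range_eq_top.mpr hsurj, finrank_top, Module.finrank_fintype_fun_eq_card,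
    Fintype.card_coe, Module.finrank_fin_fun] at hrank
  change Module.finrank K (LinearMap.ker (LinearMap.funLeft K K ι ∘ₗ Φ)) = n - #J
  omega

theorem inv_pow_mem_negacyclicCode (hω : IsPrimitiveRoot ω (2 * n)) (hJ : J ⊆ range n)
    {m : ℕ} (hm : m < n) (hmJ : m ∉ J) :
    (fun i : Fin n => (ω ^ (2 * m + 1))⁻¹ ^ (i : ℕ)) ∈ negacyclicCode ω J := by
  have hroot := pow_two_mul_add_one_pow_eq_neg_one (hω.pow_eq_neg_one (by omega))
  rw [mem_negacyclicCode]
  intro j hj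
  have hjn : j < n := mem_range.mp (hJ hj)
  set r := ω ^ (2 * j + 1) / ω ^ (2 * m + 1)
  have hr1 : r ≠ 1 := fun h => by
    have hωm : ω ^ (2 * m + 1) ≠ 0 := pow_ne_zero _ (hω.ne_zero (by omega))
    have := hω.pow_inj (by omega) (by omega) ((div_eq_one_iff_eq hωm).mp h)
    exact hmJ (by rwa [show m = j by omega])
  have hrn : r ^ n = 1 := by rw [div_pow, hroot, hroot, div_self (by norm_num)]
  rw [wordEval_apply]
  simp_rw [← mul_pow, ← div_eq_mul_inv]
  rw [Fin.sum_univ_eq_sum_range (fun i => r ^ i) n, geom_sum_eq hr1, hrn, sub_self, zero_div]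

theorem isHermLCD_negacyclicCode (hω : IsPrimitiveRoot ω (2 * n)) {q : ℕ} (hq : ω ^ q = -ω)
    (hJn : J ⊆ range n)
    (hJ : ∀ k < n, k ∉ J → ∃ m < n, m ∉ J ∧ ω ^ (2 * k + 1) * ω ^ (2 * m + 1) = -1) :
    IsHermLCD q (negacyclicCode (n := n) ω J) := by
  intro x hx hperp
  refine eq_zero_of_forall_wordEval_eq_zero hω fun k hk => ?_
  by_cases hkJ : k ∈ J
  · exact mem_negacyclicCode.mp hx k hkJ
  obtain ⟨m, hm, hmJ, hkm⟩ := hJ k hk hkJ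
  -- `(ω ^ (2 * m + 1)) ^ q = -ω ^ (2 * m + 1)`, whose inverse is `ω ^ (2 * k + 1)`
  have hconj : ((ω ^ (2 * m + 1))⁻¹) ^ q = ω ^ (2 * k + 1) := by
    rw [inv_pow, ← pow_mul, mul_comm, pow_mul, hq, Odd.neg_pow ⟨m, rfl⟩,
      eq_comm, ← mul_eq_one_iff_eq_inv₀ (neg_ne_zero.mpr (pow_ne_zero _ (hω.ne_zero (by omega))))]
    linear_combination -hkm
  rw [← hperp _ (inv_pow_mem_negacyclicCode hω hJn hm hmJ), wordEval_apply]
  refine sum_congr rfl fun i _ => ?_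
  rw [pow_right_comm _ (i : ℕ) q, hconj, mul_comm]

end PrimitiveRoot

theorem exists_isPrimitiveRoot_of_dvd_card_sub_one_s14 {K : Type*} [Field K] [Fintype K] {d : ℕ}
    (hd : d ∣ Fintype.card K - 1) : ∃ ω : K, IsPrimitiveRoot ω d := by
  classical
  obtain ⟨g, hg⟩ := IsCyclic.exists_ofOrder_eq_natCard (α := Kˣ)
  rw [Nat.card_eq_fintype_card, Fintype.card_units] at hg
  refine ⟨((g ^ (orderOf g / d) : Kˣ) : K), IsPrimitiveRoot.coe_units_iff.mpr ?_⟩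
  rw [← hg] at hd
  have hg0 : orderOf g ≠ 0 := (orderOf_pos g).ne'
  simpa [orderOf_pow_orderOf_div hg0 hd] using IsPrimitiveRoot.orderOf (g ^ (orderOf g / d))

theorem exists_notMem_Icc_pow_mul_pow_eq_neg_one {K : Type*} [Field K] {ω : K} {u : ℕ}
    (hω : ω ^ (4 * u + 2) = -1) {l k : ℕ} (hl : l ≤ u) (hk : k < 4 * u + 2)
    (hkI : k ∉ Icc (u - l) (u + l)) :
    ∃ m < 4 * u + 2, m ∉ Icc (u - l) (u + l) ∧ ω ^ (2 * k + 1) * ω ^ (2 * m + 1) = -1 := by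
  rw [mem_Icc] at hkI
  simp_rw [mem_Icc, ← pow_add]
  -- `m` is the reflection of `k` in `2 * u` modulo `n = 4 * u + 2`
  rcases le_or_gt k (2 * u) with hku | hku
  · refine ⟨2 * u - k, by omega, by omega, ?_⟩
    rw [show 2 * k + 1 + (2 * (2 * u - k) + 1) = 4 * u + 2 by omega, hω]
  · refine ⟨6 * u + 2 - k, by omega, by omega, ?_⟩
    rw [show 2 * k + 1 + (2 * (6 * u + 2 - k) + 1) = (4 * u + 2) * 3 by omega, pow_mul, hω]
    norm_num

theorem mod_four_eq_two_of_mul_eq_sub_one {q γ n : ℕ} (hq : q % 4 = 3) (hγ : Odd γ)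
    (hγn : γ * n = q - 1) : n % 4 = 2 := by
  have h := congrArg (· % 4) hγn
  rw [Nat.mul_mod] at h
  have hγ4 : γ % 4 = 1 ∨ γ % 4 = 3 := by rcases hγ with ⟨s, rfl⟩; omega
  have hn4 : n % 4 < 4 := Nat.mod_lt _ (by norm_num)
  rcases hγ4 with hγ4 | hγ4 <;> rw [hγ4] at h <;> interval_cases hr : n % 4 <;> omega

theorem stmt_14_general (q : ℕ) (hmod : q % 4 = 3)
    (E : Type) [Field E] [Fintype E] (hE : Fintype.card E = q ^ 2)
    (γ : ℕ) (hγpar : Odd γ) (hdvd : γ ∣ q - 1)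
    (n : ℕ) (hn : n = (q - 1) / γ)
    (l : ℕ) (hl : 4 * γ * l + 2 * γ + 1 ≤ q) :
    ∃ C : Submodule E (Fin n → E),
      IsNegacyclic C ∧ IsHermLCD q C ∧
      Module.finrank E C = n - 2 * l - 1 ∧
      HasMinDist (C : Set (Fin n → E)) (2 * l + 2) := by
  have hγn : γ * n = q - 1 := hn ▸ Nat.mul_div_cancel' hdvd
  obtain ⟨u, rfl⟩ : ∃ u, n = 4 * u + 2 :=
    ⟨n / 4, by have := mod_four_eq_two_of_mul_eq_sub_one hmod hγpar hγn; omega⟩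
  have hqγ : q = γ * (4 * u + 2) + 1 := by omega
  have hlu : 4 * l + 2 ≤ 4 * u + 2 :=
    Nat.le_of_mul_le_mul_left (by nlinarith) hγpar.pos
  obtain ⟨ω, hω⟩ := exists_isPrimitiveRoot_of_dvd_card_sub_one_s14 (K := E) (d := 2 * (4 * u + 2))
    ⟨γ * (γ * (2 * u + 1) + 1), by rw [hE, hqγ]; exact Nat.sub_eq_of_eq_add (by ring)⟩
  have hωn : ω ^ (4 * u + 2) = -1 := hω.pow_eq_neg_one (by omega)
  have hωq : ω ^ q = -ω := by
    rw [hqγ, pow_succ, mul_comm γ, pow_mul, hωn, hγpar.neg_one_pow, neg_one_mul]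
  set J := Icc (u - l) (u + l)
  have hJn : J ⊆ range (4 * u + 2) := fun j hj => by simp only [J, mem_Icc] at hj; simp; omega
  have hfinrank :
      Module.finrank E (negacyclicCode (n := 4 * u + 2) ω J) = 4 * u + 2 - 2 * l - 1 := by
    rw [finrank_negacyclicCode hω hJn, Nat.card_Icc]; omega
  refine ⟨negacyclicCode ω J, isNegacyclic_negacyclicCode hωn J,
    isHermLCD_negacyclicCode hω hωq hJn fun k hk hkJ =>
      exists_notMem_Icc_pow_mul_pow_eq_neg_one hωn (by omega) hk hkJ, hfinrank,
    hasMinDist_of_forall_le_wt _ (by omega) (by omega) fun c hc hc0 => ?_⟩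
  by_contra hlt
  exact hc0 (eq_zero_of_mem_negacyclicCode_of_wt_le hω (j₀ := u - l) (δ := 2 * l + 1)
    (fun t ht => by simp only [J, mem_Icc]; omega) hc (by omega))

theorem stmt_14 (q : ℕ) (hq : IsPrimePow q) (hqodd : Odd q) (hmod : q % 4 = 3)
    (E : Type) [Field E] [Fintype E] (hE : Fintype.card E = q ^ 2)
    (γ : ℕ) (hγ : 0 < γ) (hγpar : Odd γ) (hdvd : γ ∣ q - 1)
    (n : ℕ) (hn : n = (q - 1) / γ) (hn2 : 2 < n)
    (l : ℕ) (hl : 4 * γ * l + 2 * γ + 1 ≤ q) :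
    ∃ C : Submodule E (Fin n → E),
      IsNegacyclic C ∧ IsHermLCD q C ∧
      Module.finrank E C = n - 2 * l - 1 ∧
      HasMinDist (C : Set (Fin n → E)) (2 * l + 2) :=
  stmt_14_general q hmod E hE γ hγpar hdvd n hn l hl
end

section
/- Let q be an odd prime power with q ≡ 3 (mod 4), let γ be an even positive divisor of q - 1, and set n = (q-1)/γ with n > 2. Then for every integer l with 0 ≤ l and 2γl ≤ q - 3γ - 1 there exists a negacyclic Hermitian LCD code over F_{q²} of length n, dimension n - 2l - 1 and minimum distance exactly 2l + 2; in particular this code is MDS. -/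
open Finset

/-!
Since `γ` is even and `q ≡ 3 (mod 4)`, `n` is odd and `2n ∣ q - 1`, so `E` contains a primitive
`2n`-th root of unity `α` with `α^q = α`. Let `C` consist of the words whose polynomial vanishes at
the `2l + 1` roots `α^(n-2l), α^(n-2l+2), …, α^(n+2l)` of `Xⁿ + 1`. Vanishing at roots of `Xⁿ + 1`
makes `C` negacyclic. The zeros are consecutive powers of `α²`, so Lagrange interpolation gives
dimension `n - 2l - 1`, the BCH bound gives distance at least `2l + 2`, and the coefficients of
`∏ (X - β)` form a codeword of weight at most `2l + 2`. The zeros are closed under inversion, so the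
Gram matrix `H Hᵀ` of the parity-check matrix is `n` times the reversal matrix and Massey's
criterion makes `C` Euclidean LCD; as `C` is stable under `x ↦ x^q`, it is Hermitian LCD too.
-/

open Polynomial Matrix

section ZeroCode

variable {F : Type*} [Field F] {n N : ℕ}

/-- The code of the words `c` whose polynomial `∑ cᵢ Xⁱ` vanishes at every `β t`. -/
def zeroCode (n : ℕ) (β : Fin N → F) : Submodule F (Fin n → F) :=
  LinearMap.ker (rectVandermonde β 1 n).mulVecLin

theorem mem_zeroCode {β : Fin N → F} {c : Fin n → F} :
    c ∈ zeroCode n β ↔ ∀ t, ∑ i : Fin n, β t ^ (i : ℕ) * c i = 0 := by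
  simp [zeroCode, funext_iff, mulVec, dotProduct, rectVandermonde_apply]

theorem sum_negashift_mul_pow {R : Type*} [CommRing R] (c : Fin n → R) {b : R} (hb : b ^ n = -1) :
    ∑ i : Fin n, b ^ (i : ℕ) * negashift c i = b * ∑ i : Fin n, b ^ (i : ℕ) * c i := by
  cases n with
  | zero => simp
  | succ n =>
    have hshift : ∀ i : Fin n, negashift c i.succ = c i.castSucc := fun i => by
      simp [negashift, Fin.castSucc, Fin.castAdd, Fin.castLE]
    rw [Fin.sum_univ_succ, Fin.sum_univ_castSucc, mul_add, Finset.mul_sum]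
    simp only [hshift, Fin.val_succ, Fin.val_castSucc, Fin.val_last, Fin.val_zero, pow_succ]
    have h0 : negashift c 0 = -c (Fin.last n) := by simp [negashift, Fin.last]
    rw [h0]
    have hsum : ∑ i : Fin n, b ^ (i : ℕ) * b * c i.castSucc
        = ∑ i : Fin n, b * (b ^ (i : ℕ) * c i.castSucc) :=
      Finset.sum_congr rfl fun i _ => by ring
    linear_combination (-c (Fin.last n)) * hb + hsum

variable {β : Fin N → F}

theorem isNegacyclic_zeroCode (hβ : ∀ t, β t ^ n = -1) : IsNegacyclic (zeroCode n β) := by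
  intro c hc
  rw [mem_zeroCode] at hc ⊢
  intro t
  rw [sum_negashift_mul_pow c (hβ t), hc t, mul_zero]

theorem pow_mem_zeroCode {p m : ℕ} [ExpChar F p] (hβ : ∀ t, β t ^ p ^ m = β t)
    {c : Fin n → F} (hc : c ∈ zeroCode n β) : (fun i => c i ^ p ^ m) ∈ zeroCode n β := by
  rw [mem_zeroCode] at hc ⊢
  intro t
  have hβt : iterateFrobenius F p m (β t) = β t := by rw [iterateFrobenius_def, hβ]
  simpa [← iterateFrobenius_def, map_sum, hβt] using congrArg (iterateFrobenius F p m) (hc t)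

theorem isLCD_ker_mulVecLin {m : Type*} [Fintype m] [DecidableEq m] (H : Matrix m (Fin n) F)
    (hH : IsUnit (H * Hᵀ).det) : IsLCD (LinearMap.ker H.mulVecLin) := by
  intro x hx hperp
  have hHx : H *ᵥ x = 0 := hx
  suffices h : ∀ u, x ⬝ᵥ u = 0 by
    ext i
    simpa using h (Pi.single i 1)
  intro u
  -- `u = z + Hᵀ a` with `z` in the code
  set a := (H * Hᵀ)⁻¹ *ᵥ (H *ᵥ u)
  have hz : u - Hᵀ *ᵥ a ∈ LinearMap.ker H.mulVecLin := by
    simp [a, mulVec_sub, mulVec_mulVec, ← Matrix.mul_assoc, mul_nonsing_inv _ hH]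
  calc x ⬝ᵥ u = x ⬝ᵥ (u - Hᵀ *ᵥ a) + x ⬝ᵥ (Hᵀ *ᵥ a) := by rw [← dotProduct_add, sub_add_cancel]
    _ = 0 := by
      rw [dotProduct_mulVec, vecMul_transpose, hHx, zero_dotProduct, add_zero]
      exact hperp _ hz

theorem IsLCD.isHermLCD {q : ℕ} {C : Submodule F (Fin n → F)} (hC : IsLCD C)
    (hq : ∀ z : F, (z ^ q) ^ q = z) (hCq : ∀ y ∈ C, (fun i => y i ^ q) ∈ C) : IsHermLCD q C := by
  intro x hx hperp
  refine hC x hx fun z hz => ?_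
  simpa only [hq] using hperp _ (hCq z hz)

theorem eval_eq_sum_fin_pow_mul_coeff {P : F[X]} (hP : P.degree < n) (x : F) :
    P.eval x = ∑ i : Fin n, x ^ (i : ℕ) * P.coeff i := by
  by_cases hP0 : P = 0
  · simp [hP0]
  rw [eval_eq_sum_range' ((natDegree_lt_iff_degree_lt hP0).2 hP),
    ← Fin.sum_univ_eq_sum_range (fun i => P.coeff i * x ^ i)]
  simp only [mul_comm]

theorem surjective_rectVandermonde_mulVecLin (hβ : Function.Injective β) (hN : N ≤ n) :
    Function.Surjective (rectVandermonde β 1 n).mulVecLin := by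
  intro w
  set P := Lagrange.interpolate Finset.univ β w
  have hP : P.degree < n :=
    (Lagrange.degree_interpolate_lt (r := w) hβ.injOn).trans_le (by simpa using hN)
  refine ⟨fun i => P.coeff i, funext fun t => ?_⟩
  simp only [mulVecLin_apply, mulVec, dotProduct, rectVandermonde_apply,
    Pi.one_apply, one_pow, mul_one]
  rw [← eval_eq_sum_fin_pow_mul_coeff hP, Lagrange.eval_interpolate_at_node w hβ.injOn (mem_univ t)]

theorem finrank_zeroCode (hβ : Function.Injective β) (hN : N ≤ n) :
    Module.finrank F (zeroCode n β) = n - N := by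
  have h := LinearMap.finrank_range_add_finrank_ker (rectVandermonde β 1 n).mulVecLin
  rw [LinearMap.range_eq_top.2 (surjective_rectVandermonde_mulVecLin hβ hN), finrank_top,
    Module.finrank_fin_fun, Module.finrank_fin_fun] at h
  rw [zeroCode]
  omega

theorem eq_zero_of_sum_mul_pow_eq_zero {ι : Type*} {s : Finset ι} {v d : ι → F}
    (hv : Set.InjOn v s) (h : ∀ t < #s, ∑ i ∈ s, d i * v i ^ t = 0) : ∀ i ∈ s, d i = 0 := by
  let e := s.equivFin.symm
  have hzero : (fun j => d (e j)) = 0 := by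
    refine eq_zero_of_forall_pow_sum_mul_pow_eq_zero (f := fun j => v (e j))
      (fun j k hjk => e.injective (Subtype.ext (hv (e j).2 (e k).2 hjk))) fun t => ?_
    rw [← h t t.isLt, ← Finset.sum_coe_sort s]
    exact e.sum_comp fun i => d i * v i ^ (t : ℕ)
  intro i hi
  simpa [e] using congrFun hzero (s.equivFin ⟨i, hi⟩)

open scoped Classical in
theorem wt_le_card {c : Fin n → F} {s : Finset (Fin n)} (hc : ∀ i, c i ≠ 0 → i ∈ s) :
    wt c ≤ #s :=
  Finset.card_le_card fun i hi => hc i (Finset.mem_filter.1 hi).2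

open scoped Classical in
theorem le_wt_of_mem_zeroCode {a b : F} (ha : a ≠ 0)
    (hb : Function.Injective fun i : Fin n => b ^ (i : ℕ)) {c : Fin n → F}
    (hc : c ∈ zeroCode n (fun t : Fin N => a * b ^ (t : ℕ))) (hc0 : c ≠ 0) : N + 1 ≤ wt c := by
  by_contra! hlt
  set S := univ.filter fun i => c i ≠ 0
  have hS : #S ≤ N := Nat.lt_succ_iff.1 hlt
  have hzero := eq_zero_of_sum_mul_pow_eq_zero (s := S) (d := fun i => c i * a ^ (i : ℕ))
    hb.injOn fun t ht => by
      rw [← (mem_zeroCode.1 hc) ⟨t, ht.trans_le hS⟩,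
        ← Finset.sum_subset (subset_univ S) fun i _ hi => by simp_all [S]]
      exact Finset.sum_congr rfl fun i _ => by ring
  apply hc0
  ext i
  by_contra hi
  have := hzero i (by simpa [S] using hi)
  exact hi ((mul_eq_zero.1 this).resolve_right (pow_ne_zero _ ha))

theorem exists_mem_zeroCode_wt_le (β : Fin N → F) (hN : N < n) :
    ∃ c ∈ zeroCode n β, c ≠ 0 ∧ wt c ≤ N + 1 := by
  set P := ∏ t, (X - C (β t))
  have hPmonic : P.Monic := monic_prod_of_monic _ _ fun t _ => monic_X_sub_C (β t)
  have hPdeg : P.natDegree = N := by simp [P]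
  have hPn : P.degree < n := by
    rw [degree_eq_natDegree hPmonic.ne_zero, hPdeg]
    exact_mod_cast hN
  refine ⟨fun i => P.coeff i, mem_zeroCode.2 fun t => ?_, fun h => ?_, ?_⟩
  · rw [← eval_eq_sum_fin_pow_mul_coeff hPn, eval_prod]
    exact Finset.prod_eq_zero (mem_univ t) (by simp)
  · have := congrFun h ⟨N, hN⟩
    simp [← hPdeg, hPmonic.coeff_natDegree] at this
  · calc wt (fun i : Fin n => P.coeff i) ≤ #(Iic (⟨N, hN⟩ : Fin n)) :=
          wt_le_card fun i hi => mem_Iic.2 (Fin.mk_le_mk.2 ?_)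
      _ = N + 1 := Fin.card_Iic _
    by_contra! hlt
    exact hi (coeff_eq_zero_of_natDegree_lt (hPdeg ▸ hlt))

theorem hasMinDist_zeroCode {a b : F} (ha : a ≠ 0)
    (hb : Function.Injective fun i : Fin n => b ^ (i : ℕ)) (hN : N < n) :
    HasMinDist (zeroCode n (fun t : Fin N => a * b ^ (t : ℕ)) : Set (Fin n → F)) (N + 1) := by
  obtain ⟨c, hc, hc0, hwt⟩ := exists_mem_zeroCode_wt_le (fun t : Fin N => a * b ^ (t : ℕ)) hN
  refine ⟨⟨c, hc, hc0, le_antisymm hwt (le_wt_of_mem_zeroCode ha hb hc hc0)⟩, ?_⟩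
  rintro w ⟨c', hc', hc'0, rfl⟩
  exact le_wt_of_mem_zeroCode ha hb hc' hc'0

end ZeroCode

theorem FiniteField.exists_isPrimitiveRoot_of_dvd {K : Type*} [Field K] [Fintype K] {k : ℕ}
    (hk : k ∣ Fintype.card K - 1) : ∃ ζ : K, IsPrimitiveRoot ζ k := by
  obtain ⟨g, hg⟩ := IsCyclic.exists_ofOrder_eq_natCard (α := Kˣ)
  rw [Nat.card_units, Nat.card_eq_fintype_card] at hg
  have hg' : IsPrimitiveRoot (g : K) (Fintype.card K - 1) :=
    IsPrimitiveRoot.coe_units_iff.2 (hg ▸ IsPrimitiveRoot.orderOf g)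
  have hpos : Fintype.card K - 1 ≠ 0 := by
    have := Fintype.one_lt_card (α := K)
    omega
  obtain ⟨j, hj⟩ := hk
  have hj0 : j ≠ 0 := by rintro rfl; simp_all
  refine ⟨(g : K) ^ j, ?_⟩
  simpa [hj, hj0] using hg'.pow_of_dvd hj0 (Dvd.intro_left k hj.symm)

theorem IsPrimitiveRoot.injective_pow_fin {M : Type*} [CommMonoid M] {ζ : M} {k : ℕ}
    (hζ : IsPrimitiveRoot ζ k) : Function.Injective fun i : Fin k => ζ ^ (i : ℕ) :=
  fun _ _ h => Fin.ext (hζ.pow_inj (Fin.is_lt _) (Fin.is_lt _) h)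

theorem IsPrimitiveRoot.sum_pow_pow_fin {F : Type*} [Field F] {ζ : F} {k : ℕ}
    (hζ : IsPrimitiveRoot ζ k) (K : ℕ) :
    ∑ i : Fin k, (ζ ^ K) ^ (i : ℕ) = if k ∣ K then (k : F) else 0 := by
  rw [Fin.sum_univ_eq_sum_range (fun i => (ζ ^ K) ^ i)]
  split_ifs with hK
  · simp [(hζ.pow_eq_one_iff_dvd K).2 hK]
  · have hne : ζ ^ K ≠ 1 := fun h => hK ((hζ.pow_eq_one_iff_dvd K).1 h)
    rw [geom_sum_eq hne, ← pow_mul, mul_comm, pow_mul, hζ.pow_eq_one, one_pow, sub_self, zero_div]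

theorem IsPrimitiveRoot.sq_of_two_mul {M : Type*} [CommMonoid M] {α : M} {n : ℕ}
    (hα : IsPrimitiveRoot α (2 * n)) : IsPrimitiveRoot (α ^ 2) n := by
  simpa using hα.pow_of_dvd two_ne_zero (dvd_mul_right 2 n)

section SymmetricZeros

variable {F : Type*} [Field F] {α : F} {n l : ℕ}

/-- For `α` a primitive `2n`-th root of unity, the roots `α^(n-2l), α^(n-2l+2), …, α^(n+2l)`
of `Xⁿ + 1`. -/
def symmetricZeros (α : F) (n l : ℕ) : Fin (2 * l + 1) → F :=
  fun t => α ^ (n - 2 * l) * (α ^ 2) ^ (t : ℕ)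

theorem symmetricZeros_eq (t : Fin (2 * l + 1)) :
    symmetricZeros α n l t = α ^ (n - 2 * l + 2 * t) := by
  rw [symmetricZeros, ← pow_mul, ← pow_add]

theorem symmetricZeros_pow_eq_neg_one (hα : IsPrimitiveRoot α (2 * n)) (hn : Odd n)
    (hl : 2 * l < n) (t : Fin (2 * l + 1)) : symmetricZeros α n l t ^ n = -1 := by
  have hαn : α ^ n = -1 := by
    refine IsPrimitiveRoot.eq_neg_one_of_two_right ?_
    simpa [hn.pos.ne'] using hα.pow_of_dvd hn.pos.ne' (dvd_mul_left n 2)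
  have hodd : Odd (n - 2 * l + 2 * t) := by
    obtain ⟨k, rfl⟩ := hn
    exact Nat.odd_iff.2 (by omega)
  rw [symmetricZeros_eq, ← pow_mul, mul_comm, pow_mul, hαn, hodd.neg_one_pow]

theorem symmetricZeros_injective (hα : IsPrimitiveRoot α (2 * n)) (hl : 2 * l < n) :
    Function.Injective (symmetricZeros α n l) := by
  intro s t h
  have hα0 : α ≠ 0 := hα.ne_zero (by omega)
  have hst : (α ^ 2) ^ (s : ℕ) = (α ^ 2) ^ (t : ℕ) :=
    mul_left_cancel₀ (pow_ne_zero _ hα0) h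
  exact Fin.ext (hα.sq_of_two_mul.pow_inj (by omega) (by omega) hst)

theorem gram_symmetricZeros (hα : IsPrimitiveRoot α (2 * n)) (hl : 2 * l < n) :
    rectVandermonde (symmetricZeros α n l) 1 n * (rectVandermonde (symmetricZeros α n l) 1 n)ᵀ =
      (n : F) • (Fin.revPerm : Equiv.Perm (Fin (2 * l + 1))).permMatrix F := by
  ext s t
  have hprod : ∀ i : ℕ, symmetricZeros α n l s ^ i * symmetricZeros α n l t ^ i
      = ((α ^ 2) ^ (n - 2 * l + s + t)) ^ i := fun i => by
    rw [← mul_pow, symmetricZeros_eq, symmetricZeros_eq, ← pow_add, ← pow_mul α 2]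
    congr 2
    omega
  have hdvd : n ∣ n - 2 * l + s + t ↔ Fin.rev s = t := by
    rw [Fin.ext_iff, Fin.val_rev]
    have := s.is_lt
    have := t.is_lt
    constructor
    · intro h
      have := Nat.eq_of_dvd_of_lt_two_mul (by omega) h (by omega)
      omega
    · intro h
      exact ⟨1, by omega⟩
  simp only [mul_apply, transpose_apply, rectVandermonde_apply, Pi.one_apply, one_pow, mul_one,
    hprod, hα.sq_of_two_mul.sum_pow_pow_fin, hdvd, Matrix.smul_apply, PEquiv.toMatrix_apply,
    Equiv.toPEquiv_apply, Fin.revPerm_apply, Option.mem_some_iff, smul_eq_mul]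
  split_ifs <;> simp_all

theorem isUnit_det_gram_symmetricZeros (hα : IsPrimitiveRoot α (2 * n)) (hl : 2 * l < n) :
    IsUnit (rectVandermonde (symmetricZeros α n l) 1 n *
      (rectVandermonde (symmetricZeros α n l) 1 n)ᵀ).det := by
  have : NeZero n := ⟨by omega⟩
  have hn : (n : F) ≠ 0 := by
    have := hα.neZero'
    exact fun h => NeZero.ne ((2 * n : ℕ) : F) (by push_cast; rw [h, mul_zero])
  rw [gram_symmetricZeros hα hl, det_smul, det_permutation]
  exact (IsUnit.pow _ hn.isUnit).mul ((Equiv.Perm.sign _).isUnit.map (Int.castRingHom F))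

theorem isHermLCD_zeroCode_symmetricZeros {p m : ℕ} [ExpChar F p]
    (hα : IsPrimitiveRoot α (2 * n)) (hl : 2 * l < n) (hαq : α ^ p ^ m = α)
    (hF : ∀ z : F, (z ^ p ^ m) ^ p ^ m = z) :
    IsHermLCD (p ^ m) (zeroCode n (symmetricZeros α n l)) :=
  (isLCD_ker_mulVecLin _ (isUnit_det_gram_symmetricZeros hα hl)).isHermLCD hF fun _ hy =>
    pow_mem_zeroCode (fun t => by rw [symmetricZeros_eq, ← pow_mul, mul_comm, pow_mul, hαq]) hy

end SymmetricZeros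

theorem odd_of_even_mul_eq_sub_one {q γ n : ℕ} (hmod : q % 4 = 3) (hγ : Even γ)
    (h : γ * n = q - 1) : Odd n := by
  obtain ⟨γ', rfl⟩ := hγ
  obtain ⟨k, rfl⟩ | hn := Nat.even_or_odd n
  · have : q - 1 = 4 * (γ' * k) := by rw [← h]; ring
    omega
  · exact hn

theorem stmt_15_general (q : ℕ) (hq : IsPrimePow q) (hmod : q % 4 = 3)
    (E : Type) [Field E] [Fintype E] (hE : Fintype.card E = q ^ 2)
    (γ : ℕ) (hγ : 0 < γ) (hγpar : Even γ) (hdvd : γ ∣ q - 1)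
    (n : ℕ) (hn : n = (q - 1) / γ)
    (l : ℕ) (hl : 2 * γ * l + 3 * γ + 1 ≤ q) :
    ∃ C : Submodule E (Fin n → E),
      IsNegacyclic C ∧ IsHermLCD q C ∧
      Module.finrank E C = n - 2 * l - 1 ∧
      HasMinDist (C : Set (Fin n → E)) (2 * l + 2) := by
  obtain ⟨p, m, hp, -, rfl⟩ := hq
  have := Fact.mk hp.nat_prime
  have : CharP E p := charP_of_card_eq_prime_pow (f := m * 2) (by rw [hE, ← pow_mul])
  have hγn : γ * n = p ^ m - 1 := by rw [hn, Nat.mul_div_cancel' hdvd]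
  have hln : 2 * l + 3 ≤ n := by
    refine Nat.le_of_mul_le_mul_left ?_ hγ
    have : γ * (2 * l + 3) = 2 * γ * l + 3 * γ := by ring
    omega
  have h2n : 2 * n ∣ p ^ m - 1 := hγn ▸ mul_dvd_mul_right (even_iff_two_dvd.1 hγpar) n
  obtain ⟨α, hα⟩ := FiniteField.exists_isPrimitiveRoot_of_dvd (K := E) (k := 2 * n)
    (hE ▸ h2n.trans (by simpa using Nat.sub_dvd_pow_sub_pow (p ^ m) 1 2))
  have hαq : α ^ p ^ m = α := by
    obtain ⟨k, hk⟩ := h2n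
    rw [show p ^ m = 2 * n * k + 1 by omega, pow_succ, pow_mul, hα.pow_eq_one, one_pow, one_mul]
  refine ⟨zeroCode n (symmetricZeros α n l), isNegacyclic_zeroCode
      (symmetricZeros_pow_eq_neg_one hα (odd_of_even_mul_eq_sub_one hmod hγpar hγn) (by omega)),
    isHermLCD_zeroCode_symmetricZeros hα (by omega) hαq
      (fun z => by rw [← pow_mul, ← sq, ← hE, FiniteField.pow_card]), ?_,
    hasMinDist_zeroCode (pow_ne_zero _ (hα.ne_zero (by omega)))
      hα.sq_of_two_mul.injective_pow_fin (by omega)⟩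
  rw [finrank_zeroCode (symmetricZeros_injective hα (by omega)) (by omega)]
  omega

theorem stmt_15 (q : ℕ) (hq : IsPrimePow q) (hqodd : Odd q) (hmod : q % 4 = 3)
    (E : Type) [Field E] [Fintype E] (hE : Fintype.card E = q ^ 2)
    (γ : ℕ) (hγ : 0 < γ) (hγpar : Even γ) (hdvd : γ ∣ q - 1)
    (n : ℕ) (hn : n = (q - 1) / γ) (hn2 : 2 < n)
    (l : ℕ) (hl : 2 * γ * l + 3 * γ + 1 ≤ q) :
    ∃ C : Submodule E (Fin n → E),
      IsNegacyclic C ∧ IsHermLCD q C ∧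
      Module.finrank E C = n - 2 * l - 1 ∧
      HasMinDist (C : Set (Fin n → E)) (2 * l + 2) :=
  stmt_15_general q hq hmod E hE γ hγ hγpar hdvd n hn l hl
end
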